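/- arXiv:2012.02524 — 8 statements merged into one kernel-verified Lean document; each statement's English description precedes it below -/
import Mathlib

section
/- Let F₀, b, c ∈ ℝ with F₀ ≠ 0. Then there is no continuously differentiable function r : ℝ → ℝ that is 2π-periodic, satisfies r(θ) > 0 for all θ ∈ ℝ, and solves the Riccati equation r'(θ) = F₀·r(θ) + (b·cos θ + c·sin θ)·r(θ)² for all θ ∈ ℝ. -/
/-!
Dividing the Riccati equation by `r²` linearises it: `u = -1/r` satisfies
`u' = F₀ / r + b cos θ + c sin θ`. Integrating over a period, the left side vanishes by
periodicity of `u` and the trigonometric terms vanish, leaving `F₀ ∫₀^{2π} 1/r = 0`;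
since `1/r > 0`, this forces `F₀ = 0`.
-/

open Real intervalIntegral

theorem Function.Periodic.integral_eq_zero_of_hasDerivAt {u f : ℝ → ℝ} {T : ℝ}
    (hu : u.Periodic T) (hderiv : ∀ x, HasDerivAt u (f x) x)
    (hf : IntervalIntegrable f MeasureTheory.volume 0 T) : ∫ x in 0..T, f x = 0 := by
  rw [integral_eq_sub_of_hasDerivAt (fun x _ => hderiv x) hf, ← zero_add T, hu, sub_self]

theorem hasDerivAt_neg_inv_of_riccati {r q : ℝ → ℝ} {a x : ℝ}
    (hr : HasDerivAt r (a * r x + q x * r x ^ 2) x) (hx : r x ≠ 0) :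
    HasDerivAt (fun t => -(r t)⁻¹) (a * (r x)⁻¹ + q x) x :=
  (hr.inv hx).neg.congr_deriv (by field_simp)

theorem integral_mul_cos_add_mul_sin_zero_two_pi (b c : ℝ) :
    ∫ θ in (0 : ℝ)..2 * π, (b * cos θ + c * sin θ) = 0 := by
  rw [integral_add, integral_const_mul, integral_const_mul, integral_cos, integral_sin] <;>
    simp

/-- A rigid planar system in polar form: if `F₀ ≠ 0`, the Riccati equation
`r' = F₀ r + (b cos θ + c sin θ) r²` has no positive `2π`-periodic `C¹` solution. -/
theorem stmt_0 (F₀ b c : ℝ) (hF₀ : F₀ ≠ 0) :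
    ¬ ∃ r : ℝ → ℝ, ContDiff ℝ 1 r ∧
      (∀ θ : ℝ, r (θ + 2 * Real.pi) = r θ) ∧
      (∀ θ : ℝ, 0 < r θ) ∧
      (∀ θ : ℝ, deriv r θ =
        F₀ * r θ + (b * Real.cos θ + c * Real.sin θ) * (r θ) ^ 2) := by
  rintro ⟨r, hr, hper, hpos, hode⟩
  have hdiff : Differentiable ℝ r := hr.differentiable one_ne_zero
  have hne : ∀ θ, r θ ≠ 0 := fun θ => (hpos θ).ne'
  have hinv : Continuous fun θ => (r θ)⁻¹ := hdiff.continuous.inv₀ hne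
  have hu : ∀ θ, HasDerivAt (fun t => -(r t)⁻¹)
      (F₀ * (r θ)⁻¹ + (b * cos θ + c * sin θ)) θ := fun θ =>
    hasDerivAt_neg_inv_of_riccati (q := fun θ => b * cos θ + c * sin θ)
      (hode θ ▸ (hdiff θ).hasDerivAt) (hne θ)
  have hu_per : Function.Periodic (fun t => -(r t)⁻¹) (2 * π) := fun θ => by simp only [hper θ]
  have hzero : ∫ θ in (0 : ℝ)..2 * π, (F₀ * (r θ)⁻¹ + (b * cos θ + c * sin θ)) = 0 :=
    hu_per.integral_eq_zero_of_hasDerivAt hu ((by fun_prop : Continuous _).intervalIntegrable _ _)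
  rw [integral_add ((hinv.const_mul F₀).intervalIntegrable _ _)
    ((by fun_prop : Continuous fun θ => b * cos θ + c * sin θ).intervalIntegrable _ _),
    integral_const_mul, integral_mul_cos_add_mul_sin_zero_two_pi, add_zero] at hzero
  have hpos_int : 0 < ∫ θ in (0 : ℝ)..2 * π, (r θ)⁻¹ :=
    intervalIntegral_pos_of_pos (hinv.intervalIntegrable _ _) (fun θ => inv_pos.2 (hpos θ))
      two_pi_pos
  exact hF₀ ((mul_eq_zero.1 hzero).resolve_right hpos_int.ne')
end

section
/- Let n ∈ ℕ and for each j ∈ {0,1,…,n} let F_j : ℝ² → ℝ be a homogeneous polynomial of degree j, i.e. F_j(λu, λv) = λ^j F_j(u,v) for all λ, u, v ∈ ℝ. If r : ℝ → ℝ is a differentiable function satisfying r'(θ) = Σ_{j=0}^{n} F_j(cos θ, sin θ)·r(θ)^{j+1} for all θ ∈ ℝ, then the function s : ℝ → ℝ defined by s(θ) = −r(θ + π) satisfies the same equation: s'(θ) = Σ_{j=0}^{n} F_j(cos θ, sin θ)·s(θ)^{j+1} for all θ ∈ ℝ. -/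
/-! Reflecting through the origin, `(x, y) ↦ (-x, -y)`, maps the rigid system to itself, and in polar
coordinates it reads `(θ, r) ↦ (θ + π, -r)`. Concretely, evaluating the equation of `r` at `θ + π`
turns `(cos, sin)` into `(-cos, -sin)`, which multiplies `F j` by `(-1)^j`; this sign is absorbed
by `(-r)^(j+1) = -(-1)^j r^(j+1)`, and the remaining `-1` matches `d/dθ (-r (θ + π))`. -/

open Real Finset

lemma homogeneous_apply_neg {j : ℕ} {f : ℝ × ℝ → ℝ}
    (hf : ∀ lam u v : ℝ, f (lam * u, lam * v) = lam ^ j * f (u, v)) (u v : ℝ) :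
    f (-u, -v) = (-1) ^ j * f (u, v) := by
  simpa only [neg_one_mul] using hf (-1) u v

lemma sum_homogeneous_neg_mul_pow (n : ℕ) {F : ℕ → ℝ × ℝ → ℝ}
    (hF : ∀ j ≤ n, ∀ lam u v : ℝ, F j (lam * u, lam * v) = lam ^ j * F j (u, v)) (u v x : ℝ) :
    ∑ j ∈ range (n + 1), F j (u, v) * (-x) ^ (j + 1) =
      -∑ j ∈ range (n + 1), F j (-u, -v) * x ^ (j + 1) := by
  rw [← sum_neg_distrib]
  refine sum_congr rfl fun j hj => ?_
  rw [homogeneous_apply_neg (hF j (Nat.lt_succ_iff.mp (mem_range.mp hj)))]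
  ring

theorem stmt_1_general (n : ℕ) (F : ℕ → ℝ × ℝ → ℝ)
    (hhom : ∀ j ≤ n, ∀ lam u v : ℝ, F j (lam * u, lam * v) = lam ^ j * F j (u, v))
    (r : ℝ → ℝ)
    (hode : ∀ θ : ℝ, deriv r θ =
      ∑ j ∈ Finset.range (n + 1), F j (Real.cos θ, Real.sin θ) * (r θ) ^ (j + 1)) :
    ∀ θ : ℝ, deriv (fun ψ => - r (ψ + Real.pi)) θ =
      ∑ j ∈ Finset.range (n + 1),
        F j (Real.cos θ, Real.sin θ) * ((fun ψ => - r (ψ + Real.pi)) θ) ^ (j + 1) := by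
  intro θ
  rw [deriv.fun_neg, deriv_comp_add_const, hode, cos_add_pi, sin_add_pi,
    sum_homogeneous_neg_mul_pow n hhom]

/-- If each `F j` is homogeneous of degree `j` and `r` solves the polar equation of
the rigid system, then `s θ = - r (θ + π)` solves the same equation. -/
theorem stmt_1 (n : ℕ) (F : ℕ → ℝ × ℝ → ℝ)
    (hhom : ∀ j ≤ n, ∀ lam u v : ℝ, F j (lam * u, lam * v) = lam ^ j * F j (u, v))
    (r : ℝ → ℝ) (hr : Differentiable ℝ r)
    (hode : ∀ θ : ℝ, deriv r θ =
      ∑ j ∈ Finset.range (n + 1), F j (Real.cos θ, Real.sin θ) * (r θ) ^ (j + 1)) :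
    ∀ θ : ℝ, deriv (fun ψ => - r (ψ + Real.pi)) θ =
      ∑ j ∈ Finset.range (n + 1),
        F j (Real.cos θ, Real.sin θ) * ((fun ψ => - r (ψ + Real.pi)) θ) ^ (j + 1) :=
  stmt_1_general n F hhom r hode
end

section
/- Let T > 0, let p > 0 be a real number, let f : ℝ → ℝ be continuous, T-periodic and not identically zero, and let x : ℝ → ℝ be a twice continuously differentiable T-periodic function with x(t) > 0 for all t ∈ ℝ satisfying x(t)^p · x''(t) = f(t) for all t ∈ ℝ. Then ∫₀ᵀ f(t) dt < 0. -/
/-!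
Since `x ^ p * x'` is `T`-periodic, its derivative `p x ^ (p - 1) x' ^ 2 + f` has zero integral
over a period. The first summand is a nonnegative continuous periodic function, and it is
positive somewhere: otherwise `x' ≡ 0`, hence `f = x ^ p x'' ≡ 0`.
-/

open Function MeasureTheory Set

theorem Function.Periodic.deriv {f : ℝ → ℝ} {c : ℝ} (hf : Periodic f c) :
    Periodic (deriv f) c := fun t => by
  rw [← deriv_comp_add_const, hf.funext]

theorem intervalIntegral.integral_pos_of_continuous_of_nonneg_of_pos {g : ℝ → ℝ} {a b s : ℝ}
    (hg : Continuous g) (hg₀ : ∀ t, 0 ≤ g t) (hs : s ∈ Ioo a b) (hgs : 0 < g s) :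
    0 < ∫ t in a..b, g t := by
  have hab : a < b := hs.1.trans hs.2
  refine (intervalIntegral.integral_pos_iff_support_of_nonneg_ae
    (Filter.Eventually.of_forall hg₀) (hg.intervalIntegrable a b)).2 ⟨hab, ?_⟩
  refine Measure.measure_pos_of_mem_nhds (x := s) volume (Filter.inter_mem ?_ ?_)
  · exact hg.isOpen_support.mem_nhds hgs.ne'
  · exact Filter.mem_of_superset (Ioo_mem_nhds hs.1 hs.2) Ioo_subset_Ioc_self

theorem Function.Periodic.intervalIntegral_pos {g : ℝ → ℝ} {T s : ℝ} (hgT : Periodic g T)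
    (hT : 0 < T) (hg : Continuous g) (hg₀ : ∀ t, 0 ≤ g t) (hgs : 0 < g s) :
    0 < ∫ t in (0 : ℝ)..T, g t := by
  rw [← zero_add T, hgT.intervalIntegral_add_eq 0 (s - T / 2)]
  exact intervalIntegral.integral_pos_of_continuous_of_nonneg_of_pos hg hg₀
    ⟨by linarith, by linarith⟩ hgs

theorem Function.Periodic.intervalIntegral_deriv_eq_zero {F F' : ℝ → ℝ} {T : ℝ}
    (hF : Periodic F T) (hderiv : ∀ t, HasDerivAt F (F' t) t) (hF' : Continuous F') :
    ∫ t in (0 : ℝ)..T, F' t = 0 := by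
  rw [intervalIntegral.integral_eq_sub_of_hasDerivAt (fun t _ => hderiv t)
    (hF'.intervalIntegrable 0 T), sub_eq_zero, ← zero_add T, hF]

theorem hasDerivAt_rpow_mul_deriv {x : ℝ → ℝ} {p t : ℝ} (hx : DifferentiableAt ℝ x t)
    (hx' : DifferentiableAt ℝ (deriv x) t) (hxt : x t ≠ 0) :
    HasDerivAt (fun s => x s ^ p * deriv x s)
      (p * x t ^ (p - 1) * deriv x t ^ 2 + x t ^ p * deriv (deriv x) t) t :=
  ((hx.hasDerivAt.rpow_const (p := p) (Or.inl hxt)).mul hx'.hasDerivAt).congr_deriv (by ring)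

theorem stmt_5_general (T p : ℝ) (hT : 0 < T) (hp : 0 < p)
    (f : ℝ → ℝ) (hf : Continuous f)
    (hfne : ∃ t, f t ≠ 0)
    (x : ℝ → ℝ) (hx : ContDiff ℝ 2 x) (hxT : ∀ t : ℝ, x (t + T) = x t)
    (hxpos : ∀ t : ℝ, 0 < x t)
    (hode : ∀ t : ℝ, (x t) ^ p * deriv (deriv x) t = f t) :
    (∫ t in (0:ℝ)..T, f t) < 0 := by
  have hx₁ : Differentiable ℝ x := hx.differentiable two_ne_zero
  have hx₂ : Differentiable ℝ (deriv x) := hx.differentiable_deriv_two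
  have hx'T : Periodic (deriv x) T := Periodic.deriv hxT
  set E : ℝ → ℝ := fun t => p * x t ^ (p - 1) * deriv x t ^ 2 with hE
  have hEper : Periodic E T := fun t => by simp only [hE, hxT t, hx'T t]
  have hEcont : Continuous E :=
    (continuous_const.mul (hx₁.continuous.rpow_const fun t => Or.inl (hxpos t).ne')).mul
      (hx₂.continuous.pow 2)
  have hE₀ : ∀ t, 0 ≤ E t := fun t => by have := hxpos t; positivity
  have hsum : ∫ t in (0 : ℝ)..T, (E t + f t) = 0 := by
    refine Periodic.intervalIntegral_deriv_eq_zero (F := fun s => x s ^ p * deriv x s)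
      (fun t => by simp only [hxT t, hx'T t]) (fun t => ?_) (hEcont.add hf)
    rw [← hode t]
    exact hasDerivAt_rpow_mul_deriv (hx₁ t) (hx₂ t) (hxpos t).ne'
  obtain ⟨s, hs⟩ : ∃ s, deriv x s ≠ 0 := by
    by_contra! hconst
    obtain ⟨t, ht⟩ := hfne
    exact ht (by rw [← hode t, funext hconst, deriv_const, mul_zero])
  have hEpos : 0 < ∫ t in (0 : ℝ)..T, E t :=
    hEper.intervalIntegral_pos hT hEcont hE₀ (s := s) (by have := hxpos s; positivity)
  rw [intervalIntegral.integral_add (hEcont.intervalIntegrable 0 T) (hf.intervalIntegrable 0 T)]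
    at hsum
  linarith

/-- Second necessary condition for positive `T`-periodic solutions of `x^p x'' = f`:
if `f` is continuous, `T`-periodic and not identically zero, then `∫₀ᵀ f < 0`. -/
theorem stmt_5 (T p : ℝ) (hT : 0 < T) (hp : 0 < p)
    (f : ℝ → ℝ) (hf : Continuous f) (hfT : ∀ t : ℝ, f (t + T) = f t)
    (hfne : ∃ t, f t ≠ 0)
    (x : ℝ → ℝ) (hx : ContDiff ℝ 2 x) (hxT : ∀ t : ℝ, x (t + T) = x t)
    (hxpos : ∀ t : ℝ, 0 < x t)
    (hode : ∀ t : ℝ, (x t) ^ p * deriv (deriv x) t = f t) :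
    (∫ t in (0:ℝ)..T, f t) < 0 :=
  stmt_5_general T p hT hp f hf hfne x hx hxT hxpos hode
end

section
/- Define F : ℝ³ → ℝ³ by F(x,y,z) = (−x + z(x+yz)², −y − (x+yz)², −z). Then the curve φ : ℝ → ℝ³ given by φ(t) = (18e^t, −12e^{2t}, e^{−t}) satisfies φ'(t) = F(φ(t)) for all t ∈ ℝ, and ‖φ(t)‖ → ∞ as t → ∞. -/
/-- The vector field of the 3-dimensional polynomial counterexample to the
Markus–Yamabe conjecture. -/
def MYField : ℝ × ℝ × ℝ → ℝ × ℝ × ℝ := fun p =>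
  (-p.1 + p.2.2 * (p.1 + p.2.1 * p.2.2) ^ 2,
   -p.2.1 - (p.1 + p.2.1 * p.2.2) ^ 2,
   -p.2.2)

/-- The explicit unbounded solution `φ(t) = (18 eᵗ, −12 e^{2t}, e^{−t})`. -/
noncomputable def MYSol : ℝ → ℝ × ℝ × ℝ := fun t =>
  (18 * Real.exp t, -12 * Real.exp (2 * t), Real.exp (-t))

/-! Along `φ` the nonlinearity `x + y z` collapses to `6 eᵗ`, so `F ∘ φ` is a sum of
exponentials which matches `φ'` term by term. The first coordinate `18 eᵗ` alone
already forces `‖φ t‖ → ∞`. -/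

open Real Filter

lemma hasDerivAt_MYSol (t : ℝ) :
    HasDerivAt MYSol (18 * exp t, -24 * exp (2 * t), -exp (-t)) t := by
  have hx : HasDerivAt (fun t => 18 * exp t) (18 * exp t) t :=
    (hasDerivAt_exp t).const_mul 18
  have hy : HasDerivAt (fun t => -12 * exp (2 * t)) (-24 * exp (2 * t)) t := by
    refine ((((hasDerivAt_id' t).const_mul 2).exp).const_mul (-12 : ℝ)).congr_deriv ?_
    ring
  have hz : HasDerivAt (fun t => exp (-t)) (-exp (-t)) t := by
    simpa using (hasDerivAt_neg t).exp
  exact hx.prodMk (hy.prodMk hz)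

lemma MYSol_fst_add_snd_mul_thd (t : ℝ) :
    (MYSol t).1 + (MYSol t).2.1 * (MYSol t).2.2 = 6 * exp t := by
  have h : exp (2 * t) * exp (-t) = exp t := by rw [← exp_add]; ring_nf
  simp only [MYSol]
  linear_combination (-12) * h

lemma MYField_MYSol (t : ℝ) :
    MYField (MYSol t) = (18 * exp t, -24 * exp (2 * t), -exp (-t)) := by
  have hsq : exp t ^ 2 = exp (2 * t) := by rw [← exp_nat_mul]; norm_num
  have hinv : exp (-t) * exp t = 1 := by rw [← exp_add]; simp
  rw [MYField, MYSol_fst_add_snd_mul_thd]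
  simp only [MYSol, Prod.mk.injEq]
  exact ⟨by linear_combination (36 * exp t) * hinv, by linear_combination (-36) * hsq, trivial⟩

theorem stmt_6 :
    (∀ t : ℝ, HasDerivAt MYSol (MYField (MYSol t)) t) ∧
    Filter.Tendsto (fun t => ‖MYSol t‖) Filter.atTop Filter.atTop := by
  refine ⟨fun t => MYField_MYSol t ▸ hasDerivAt_MYSol t, ?_⟩
  have hfst : Tendsto (fun t => 18 * exp t) atTop atTop :=
    tendsto_exp_atTop.const_mul_atTop (by norm_num)
  refine tendsto_atTop_mono (fun t => ?_) hfst
  calc 18 * exp t = ‖(MYSol t).1‖ := by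
        rw [MYSol, Real.norm_of_nonneg (by positivity)]
    _ ≤ ‖MYSol t‖ := norm_fst_le _
end

section
/- Let a, b ∈ ℝ with a ≠ 0. Then the planar Liénard system ẋ = y − (ax + bx²), ẏ = −x has no nonconstant periodic solution; that is, there is no nonconstant differentiable γ = (x,y) : ℝ → ℝ² and T > 0 with γ(t+T) = γ(t) for all t satisfying x'(t) = y(t) − a x(t) − b x(t)² and y'(t) = −x(t) for all t. -/
/-!
With the Dulac function `B = e^{-2by}` the vector field `B · (y - ax - bx², -x)` has divergence
`-a e^{-2by}`. For `a = 0` it is therefore a Hamiltonian field, and (twice) its stream function `V`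
is a first integral; for general `a` the damping term gives `dV/dt = -2a x² e^{-2by}` along
solutions. Hence `a V` is nonincreasing along a solution; on a periodic orbit it must be constant,
which forces `x ≡ 0`, then `y ≡ 0` from the first equation, so the orbit is a point.
-/

open Real Function

theorem Function.Periodic.eq_apply_zero_of_antitone {α β : Type*} [AddCommGroup α] [LinearOrder α]
    [IsOrderedAddMonoid α] [Archimedean α] [PartialOrder β] {f : α → β} {T : α}
    (hf : Periodic f T) (hT : 0 < T) (hanti : Antitone f) (t : α) : f t = f 0 := by
  obtain ⟨s, ⟨hs₀, hsT⟩, hts⟩ := hf.exists_mem_Ico₀ hT t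
  rw [hts]
  refine le_antisymm (hanti hs₀) ?_
  calc f 0 = f T := hf.eq.symm
    _ ≤ f s := hanti hsT.le

theorem Function.Periodic.eq_zero_of_hasDerivAt_of_nonpos {f f' : ℝ → ℝ} {T : ℝ}
    (hf : Periodic f T) (hT : 0 < T) (hderiv : ∀ t, HasDerivAt f (f' t) t)
    (hf' : ∀ t, f' t ≤ 0) (t : ℝ) : f' t = 0 := by
  have hanti : Antitone f :=
    antitone_of_deriv_nonpos (fun t => (hderiv t).differentiableAt)
      fun t => (hderiv t).deriv ▸ hf' t
  have hconst : f = fun _ => f 0 := funext (hf.eq_apply_zero_of_antitone hT hanti)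
  exact (hderiv t).unique (hconst ▸ hasDerivAt_const t (f 0))

/-- Twice the stream function of `e^{-2by} · (y - bx², -x)`. -/
noncomputable def lienardDulacEnergy (b : ℝ) (p : ℝ × ℝ) : ℝ :=
  if b = 0 then p.1 ^ 2 + p.2 ^ 2
  else exp (-2 * b * p.2) * (p.1 ^ 2 - p.2 / b - 1 / (2 * b ^ 2))

theorem hasDerivAt_lienardDulacEnergy {a b : ℝ} {γ : ℝ → ℝ × ℝ} {t : ℝ}
    (hγ : HasDerivAt γ ((γ t).2 - a * (γ t).1 - b * (γ t).1 ^ 2, -(γ t).1) t) :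
    HasDerivAt (fun s => lienardDulacEnergy b (γ s))
      (-2 * a * exp (-2 * b * (γ t).2) * (γ t).1 ^ 2) t := by
  have hx : HasDerivAt (fun s => (γ s).1) ((γ t).2 - a * (γ t).1 - b * (γ t).1 ^ 2) t := hγ.fst
  have hy : HasDerivAt (fun s => (γ s).2) (-(γ t).1) t := hγ.snd
  by_cases hb : b = 0
  · subst hb
    simp only [lienardDulacEnergy, if_true]
    refine ((hx.fun_pow 2).fun_add (hy.fun_pow 2)).congr_deriv ?_
    norm_num
    ring
  · simp only [lienardDulacEnergy, hb, if_false]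
    have hexp := (hy.const_mul (-2 * b)).exp
    have hpoly := ((hx.fun_pow 2).fun_sub (hy.div_const b)).sub_const (1 / (2 * b ^ 2))
    refine (hexp.mul hpoly).congr_deriv ?_
    field_simp
    ring

/-- A Liénard system `ẋ = y − (ax + bx²), ẏ = −x` with `a ≠ 0` has no nonconstant
periodic solution. -/
theorem stmt_8 (a b : ℝ) (ha : a ≠ 0) :
    ¬ ∃ (γ : ℝ → ℝ × ℝ) (T : ℝ),
      Differentiable ℝ γ ∧ 0 < T ∧ (∀ t : ℝ, γ (t + T) = γ t) ∧
      (∃ t t' : ℝ, γ t ≠ γ t') ∧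
      (∀ t : ℝ, deriv γ t =
        ((γ t).2 - a * (γ t).1 - b * (γ t).1 ^ 2, -(γ t).1)) := by
  rintro ⟨γ, T, hdiff, hT, hper, ⟨t₀, t₁, hne⟩, hode⟩
  have hγ (t : ℝ) : HasDerivAt γ ((γ t).2 - a * (γ t).1 - b * (γ t).1 ^ 2, -(γ t).1) t :=
    hode t ▸ (hdiff t).hasDerivAt
  have hV : Periodic (fun t => a * lienardDulacEnergy b (γ t)) T := fun t => by
    simp only [hper t]
  have hx (t : ℝ) : (γ t).1 = 0 := by
    have h := hV.eq_zero_of_hasDerivAt_of_nonpos hT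
      (fun s => (hasDerivAt_lienardDulacEnergy (hγ s)).const_mul a)
      (fun s => by
        have := exp_pos (-2 * b * (γ s).2)
        nlinarith [mul_nonneg (mul_nonneg (sq_nonneg a) this.le) (sq_nonneg (γ s).1)]) t
    simpa [ha, (exp_pos _).ne'] using h
  have hy (t : ℝ) : (γ t).2 = 0 := by
    have hx' : HasDerivAt (fun s => (γ s).1) 0 t := funext hx ▸ hasDerivAt_const t 0
    have hx'' : HasDerivAt (fun s => (γ s).1) ((γ t).2 - a * (γ t).1 - b * (γ t).1 ^ 2) t :=
      (hγ t).fst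
    simpa [hx] using hx''.unique hx'
  exact hne (Prod.ext (by rw [hx, hx]) (by rw [hy, hy]))
end

section
/- Consider the bivariate trinomial system P(x,y) = x⁶ + (61/43)y³ − y = 0, Q(x,y) = y⁶ + (61/43)x³ − x = 0. This system has at least 5 distinct solutions (x,y) with x > 0 and y > 0, each of which is simple, i.e. the Jacobian determinant (∂P/∂x)(∂Q/∂y) − (∂P/∂y)(∂Q/∂x) is nonzero at each of these solutions. In particular this provides a counterexample to Kouchnirenko's conjecture, which predicted at most (3−1)(3−1) = 4 such solutions for a system of two trinomials. -/
set_option maxHeartbeats 800000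


/-- The first trinomial of the counterexample to Kouchnirenko's conjecture. -/
noncomputable def Pkou : ℝ → ℝ → ℝ := fun x y => x ^ 6 + (61 / 43) * y ^ 3 - y

/-- The second trinomial of the counterexample to Kouchnirenko's conjecture. -/
noncomputable def Qkou : ℝ → ℝ → ℝ := fun x y => y ^ 6 + (61 / 43) * x ^ 3 - x


noncomputable def gkou : ℝ → ℝ := fun x => x - (61 / 43) * x ^ 3
noncomputable def phikou : ℝ → ℝ := fun x => (gkou x) ^ ((6 : ℝ)⁻¹)
noncomputable def Fkou : ℝ → ℝ := fun x => x ^ 6 + (61 / 43) * (phikou x) ^ 3 - phikou x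

lemma phikou_nonneg (x : ℝ) (h : 0 ≤ gkou x) : 0 ≤ phikou x :=
  Real.rpow_nonneg h _

lemma phikou_pow (x : ℝ) (h : 0 ≤ gkou x) : (phikou x) ^ 6 = gkou x := by
  have := Real.rpow_inv_natCast_pow h (n := 6) (by norm_num)
  simpa [phikou] using this

lemma Fkou_continuous : Continuous Fkou := by
  have hg : Continuous gkou := by unfold gkou; continuity
  have hphi : Continuous phikou := by
    have h6 : Continuous fun t : ℝ => t ^ ((6 : ℝ)⁻¹) := by
      rw [continuous_iff_continuousAt]
      intro x
      exact Real.continuousAt_rpow_const x _ (Or.inr (by norm_num))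
    exact h6.comp hg
  unfold Fkou
  continuity

lemma phikou_bounds (x l u : ℝ) (hu : 0 ≤ u)
    (h1 : l ^ 6 ≤ gkou x) (h2 : gkou x ≤ u ^ 6) :
    l ≤ phikou x ∧ phikou x ≤ u := by
  have hg : 0 ≤ gkou x := le_trans (by positivity) h1
  have hp := phikou_pow x hg
  have hpn := phikou_nonneg x hg
  constructor
  · exact le_of_pow_le_pow_left₀ (n := 6) (by norm_num) hpn (by rw [hp]; exact h1)
  · exact le_of_pow_le_pow_left₀ (n := 6) (by norm_num) hu (by rw [hp]; exact h2)

lemma derivPx (y x : ℝ) : deriv (fun x => Pkou x y) x = 6 * x ^ 5 := by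
  have h : HasDerivAt (fun x : ℝ => x ^ 6 + (61 / 43) * y ^ 3 - y)
      ((6 : ℕ) * x ^ (6 - 1)) x :=
    ((hasDerivAt_pow 6 x).add_const ((61 / 43) * y ^ 3)).sub_const y
  have := h.deriv
  simp only [Pkou]; rw [this]; norm_num

lemma derivPy (x y : ℝ) : deriv (fun y => Pkou x y) y = 3 * (61 / 43) * y ^ 2 - 1 := by
  have h : HasDerivAt (fun y : ℝ => x ^ 6 + (61 / 43) * y ^ 3 - y)
      ((61 / 43) * ((3 : ℕ) * y ^ (3 - 1)) - 1) y :=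
    (((hasDerivAt_pow 3 y).const_mul (61 / 43)).const_add (x ^ 6)).sub (hasDerivAt_id y)
  have := h.deriv
  simp only [Pkou]; rw [this]; norm_num; ring

lemma derivQy (x y : ℝ) : deriv (fun y => Qkou x y) y = 6 * y ^ 5 := by
  have h : HasDerivAt (fun y : ℝ => y ^ 6 + (61 / 43) * x ^ 3 - x)
      ((6 : ℕ) * y ^ (6 - 1)) y :=
    ((hasDerivAt_pow 6 y).add_const ((61 / 43) * x ^ 3)).sub_const x
  have := h.deriv
  simp only [Qkou]; rw [this]; norm_num

lemma derivQx (y x : ℝ) : deriv (fun x => Qkou x y) x = 3 * (61 / 43) * x ^ 2 - 1 := by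
  have h : HasDerivAt (fun x : ℝ => y ^ 6 + (61 / 43) * x ^ 3 - x)
      ((61 / 43) * ((3 : ℕ) * x ^ (3 - 1)) - 1) x :=
    (((hasDerivAt_pow 3 x).const_mul (61 / 43)).const_add (y ^ 6)).sub (hasDerivAt_id x)
  have := h.deriv
  simp only [Qkou]; rw [this]; norm_num; ring

/-- Master construction; `ε = 1` builds an upward crossing (Jacobian positive),
`ε = -1` a downward crossing (Jacobian negative); handled by two lemmas. -/
lemma make_sol_pos (a b la ua lb ub l u : ℝ)
    (ha0 : 0 < a) (hab : a ≤ b)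
    (hl0 : 0 < l) (hu0 : 0 ≤ u)
    (hla0 : 0 ≤ la) (hlb0 : 0 ≤ lb)
    (hua0 : 0 ≤ ua) (hub0 : 0 ≤ ub)
    (hga1 : la ^ 6 ≤ gkou a) (hga2 : gkou a ≤ ua ^ 6)
    (hgb1 : lb ^ 6 ≤ gkou b) (hgb2 : gkou b ≤ ub ^ 6)
    (hFa : a ^ 6 + (61 / 43) * ua ^ 3 - la < 0)
    (hFb : 0 < b ^ 6 + (61 / 43) * lb ^ 3 - ub)
    (hl6 : l ^ 6 ≤ gkou b) (hu6 : gkou a ≤ u ^ 6)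
    (hfacl : 1 ≤ 3 * (61 / 43) * l ^ 2)
    (hfaca : 1 ≤ 3 * (61 / 43) * a ^ 2)
    (hJ : (3 * (61 / 43) * u ^ 2 - 1) * (3 * (61 / 43) * b ^ 2 - 1) < 36 * a ^ 5 * l ^ 5) :
    ∃ x y : ℝ, a ≤ x ∧ x ≤ b ∧ 0 < x ∧ 0 < y ∧ Pkou x y = 0 ∧ Qkou x y = 0 ∧
      deriv (fun x' => Pkou x' y) x * deriv (fun y' => Qkou x y') y -
        deriv (fun y' => Pkou x y') y * deriv (fun x' => Qkou x' y) x ≠ 0 := by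
  -- sign of F at the endpoints
  have hga0 : 0 ≤ gkou a := le_trans (by positivity) hga1
  have hgb0 : 0 ≤ gkou b := le_trans (by positivity) hgb1
  obtain ⟨ha1, ha2⟩ := phikou_bounds a la ua hua0 hga1 hga2
  obtain ⟨hb1, hb2⟩ := phikou_bounds b lb ub hub0 hgb1 hgb2
  have hta := phikou_nonneg a hga0
  have htb := phikou_nonneg b hgb0
  have hFa' : Fkou a < 0 := by
    have h3 : (phikou a) ^ 3 ≤ ua ^ 3 := pow_le_pow_left₀ hta ha2 3
    unfold Fkou; linarith
  have hFb' : 0 < Fkou b := by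
    have h3 : lb ^ 3 ≤ (phikou b) ^ 3 := pow_le_pow_left₀ hlb0 hb1 3
    unfold Fkou; linarith
  -- intermediate value theorem
  have hsub := intermediate_value_Icc hab Fkou_continuous.continuousOn
  obtain ⟨x, hx, hFx⟩ := hsub ⟨hFa'.le, hFb'.le⟩
  obtain ⟨hxa, hxb⟩ := hx
  have hx0 : 0 < x := lt_of_lt_of_le ha0 hxa
  -- bounds on gkou x by monotonicity on [a,b]
  have hgx1 : gkou b ≤ gkou x := by
    unfold gkou
    nlinarith [mul_nonneg (sub_nonneg.2 hxb)
      (by nlinarith : (0:ℝ) ≤ (61/43) * (x^2 + x*b + b^2) - 1)]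
  have hgx2 : gkou x ≤ gkou a := by
    unfold gkou
    nlinarith [mul_nonneg (sub_nonneg.2 hxa)
      (by nlinarith : (0:ℝ) ≤ (61/43) * (a^2 + a*x + x^2) - 1)]
  set y := phikou x with hy
  have hgx0 : 0 ≤ gkou x := le_trans hgb0 hgx1
  obtain ⟨hyl, hyu⟩ := phikou_bounds x l u hu0 (le_trans hl6 hgx1) (le_trans hgx2 hu6)
  have hy0 : 0 < y := lt_of_lt_of_le hl0 hyl
  refine ⟨x, y, hxa, hxb, hx0, hy0, ?_, ?_, ?_⟩
  · simpa [Pkou, Fkou, hy] using hFx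
  · have h6 := phikou_pow x hgx0
    simp only [Qkou, hy, h6]
    unfold gkou; ring
  · rw [derivPx, derivPy, derivQx, derivQy]
    apply ne_of_gt
    have hx5 : a ^ 5 ≤ x ^ 5 := pow_le_pow_left₀ ha0.le hxa 5
    have hy5 : l ^ 5 ≤ y ^ 5 := pow_le_pow_left₀ hl0.le hyl 5
    have hx2 : x ^ 2 ≤ b ^ 2 := pow_le_pow_left₀ hx0.le hxb 2
    have hy2 : y ^ 2 ≤ u ^ 2 := pow_le_pow_left₀ hy0.le hyu 2
    have ha2x : a ^ 2 ≤ x ^ 2 := pow_le_pow_left₀ ha0.le hxa 2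
    have hl2y : l ^ 2 ≤ y ^ 2 := pow_le_pow_left₀ hl0.le hyl 2
    have hprod1 : 36 * a ^ 5 * l ^ 5 ≤ 6 * x ^ 5 * (6 * y ^ 5) := by
      have h := mul_le_mul hx5 hy5 (by positivity : (0:ℝ) ≤ l ^ 5) (by positivity : (0:ℝ) ≤ x ^ 5)
      calc 36 * a ^ 5 * l ^ 5 = 36 * (a ^ 5 * l ^ 5) := by ring
        _ ≤ 36 * (x ^ 5 * y ^ 5) := by linarith
        _ = 6 * x ^ 5 * (6 * y ^ 5) := by ring
    have hprod2 : (3 * (61/43) * y ^ 2 - 1) * (3 * (61/43) * x ^ 2 - 1) ≤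
        (3 * (61/43) * u ^ 2 - 1) * (3 * (61/43) * b ^ 2 - 1) :=
      mul_le_mul (by linarith) (by linarith) (by linarith) (by linarith)
    linarith

lemma make_sol_neg (a b la ua lb ub l u : ℝ)
    (ha0 : 0 < a) (hab : a ≤ b)
    (hl0 : 0 < l) (hu0 : 0 ≤ u)
    (hla0 : 0 ≤ la) (hlb0 : 0 ≤ lb)
    (hua0 : 0 ≤ ua) (hub0 : 0 ≤ ub)
    (hga1 : la ^ 6 ≤ gkou a) (hga2 : gkou a ≤ ua ^ 6)
    (hgb1 : lb ^ 6 ≤ gkou b) (hgb2 : gkou b ≤ ub ^ 6)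
    (hFa : 0 < a ^ 6 + (61 / 43) * la ^ 3 - ua)
    (hFb : b ^ 6 + (61 / 43) * ub ^ 3 - lb < 0)
    (hl6 : l ^ 6 ≤ gkou b) (hu6 : gkou a ≤ u ^ 6)
    (hfacl : 1 ≤ 3 * (61 / 43) * l ^ 2)
    (hfaca : 1 ≤ 3 * (61 / 43) * a ^ 2)
    (hJ : 36 * b ^ 5 * u ^ 5 < (3 * (61 / 43) * l ^ 2 - 1) * (3 * (61 / 43) * a ^ 2 - 1)) :
    ∃ x y : ℝ, a ≤ x ∧ x ≤ b ∧ 0 < x ∧ 0 < y ∧ Pkou x y = 0 ∧ Qkou x y = 0 ∧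
      deriv (fun x' => Pkou x' y) x * deriv (fun y' => Qkou x y') y -
        deriv (fun y' => Pkou x y') y * deriv (fun x' => Qkou x' y) x ≠ 0 := by
  have hga0 : 0 ≤ gkou a := le_trans (by positivity) hga1
  have hgb0 : 0 ≤ gkou b := le_trans (by positivity) hgb1
  obtain ⟨ha1, ha2⟩ := phikou_bounds a la ua hua0 hga1 hga2
  obtain ⟨hb1, hb2⟩ := phikou_bounds b lb ub hub0 hgb1 hgb2
  have hta := phikou_nonneg a hga0
  have htb := phikou_nonneg b hgb0
  have hFa' : 0 < Fkou a := by
    have h3 : la ^ 3 ≤ (phikou a) ^ 3 := pow_le_pow_left₀ hla0 ha1 3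
    unfold Fkou; linarith
  have hFb' : Fkou b < 0 := by
    have h3 : (phikou b) ^ 3 ≤ ub ^ 3 := pow_le_pow_left₀ htb hb2 3
    unfold Fkou; linarith
  have hsub := intermediate_value_Icc' hab Fkou_continuous.continuousOn
  obtain ⟨x, hx, hFx⟩ := hsub ⟨hFb'.le, hFa'.le⟩
  obtain ⟨hxa, hxb⟩ := hx
  have hx0 : 0 < x := lt_of_lt_of_le ha0 hxa
  have hgx1 : gkou b ≤ gkou x := by
    unfold gkou
    nlinarith [mul_nonneg (sub_nonneg.2 hxb)
      (by nlinarith : (0:ℝ) ≤ (61/43) * (x^2 + x*b + b^2) - 1)]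
  have hgx2 : gkou x ≤ gkou a := by
    unfold gkou
    nlinarith [mul_nonneg (sub_nonneg.2 hxa)
      (by nlinarith : (0:ℝ) ≤ (61/43) * (a^2 + a*x + x^2) - 1)]
  set y := phikou x with hy
  have hgx0 : 0 ≤ gkou x := le_trans hgb0 hgx1
  obtain ⟨hyl, hyu⟩ := phikou_bounds x l u hu0 (le_trans hl6 hgx1) (le_trans hgx2 hu6)
  have hy0 : 0 < y := lt_of_lt_of_le hl0 hyl
  refine ⟨x, y, hxa, hxb, hx0, hy0, ?_, ?_, ?_⟩
  · simpa [Pkou, Fkou, hy] using hFx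
  · have h6 := phikou_pow x hgx0
    simp only [Qkou, hy, h6]
    unfold gkou; ring
  · rw [derivPx, derivPy, derivQx, derivQy]
    apply ne_of_lt
    have hx5 : x ^ 5 ≤ b ^ 5 := pow_le_pow_left₀ hx0.le hxb 5
    have hy5 : y ^ 5 ≤ u ^ 5 := pow_le_pow_left₀ hy0.le hyu 5
    have ha2x : a ^ 2 ≤ x ^ 2 := pow_le_pow_left₀ ha0.le hxa 2
    have hl2y : l ^ 2 ≤ y ^ 2 := pow_le_pow_left₀ hl0.le hyl 2
    have hprod1 : 6 * x ^ 5 * (6 * y ^ 5) ≤ 36 * b ^ 5 * u ^ 5 := by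
      have h := mul_le_mul hx5 hy5 (by positivity : (0:ℝ) ≤ y ^ 5)
        (le_trans (by positivity : (0:ℝ) ≤ x ^ 5) hx5)
      calc 6 * x ^ 5 * (6 * y ^ 5) = 36 * (x ^ 5 * y ^ 5) := by ring
        _ ≤ 36 * (b ^ 5 * u ^ 5) := by linarith
        _ = 36 * b ^ 5 * u ^ 5 := by ring
    have hprod2 : (3 * (61/43) * l ^ 2 - 1) * (3 * (61/43) * a ^ 2 - 1) ≤
        (3 * (61/43) * y ^ 2 - 1) * (3 * (61/43) * x ^ 2 - 1) :=
      mul_le_mul (by linarith) (by linarith) (by linarith) (by linarith)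
    linarith
/-- The system `P = Q = 0` has at least 5 distinct simple solutions with positive
coordinates, contradicting Kouchnirenko's predicted bound `(3−1)(3−1) = 4`. -/
theorem stmt_10 :
    ∃ S : Finset (ℝ × ℝ), 5 ≤ S.card ∧
      ∀ p ∈ S, 0 < p.1 ∧ 0 < p.2 ∧ Pkou p.1 p.2 = 0 ∧ Qkou p.1 p.2 = 0 ∧
        deriv (fun x => Pkou x p.2) p.1 * deriv (fun y => Qkou p.1 y) p.2 -
          deriv (fun y => Pkou p.1 y) p.2 * deriv (fun x => Qkou x p.2) p.1 ≠ 0 := by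
  classical
  obtain ⟨x1, y1, hx1a, hx1b, hx1p, hy1p, hP1, hQ1, hJ1⟩ :=
    make_sol_pos (298393/500000) (596797/1000000) (8160223373/10000000000)
      (4080111687/5000000000) (204004931/250000000) (8160197241/10000000000)
      (816019/1000000) (816023/1000000)
      (by norm_num) (by norm_num) (by norm_num) (by norm_num) (by norm_num) (by norm_num)
      (by norm_num) (by norm_num)
      (by norm_num [gkou]) (by norm_num [gkou]) (by norm_num [gkou]) (by norm_num [gkou])
      (by norm_num) (by norm_num)
      (by norm_num [gkou]) (by norm_num [gkou]) (by norm_num) (by norm_num) (by norm_num)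
  obtain ⟨x2, y2, hx2a, hx2b, hx2p, hy2p, hP2, hQ2, hJ2⟩ :=
    make_sol_neg (68913/100000) (689141/1000000) (1559614807/2000000000)
      (1949518509/2500000000) (7798009113/10000000000) (3899004557/5000000000)
      (3899/5000) (24369/31250)
      (by norm_num) (by norm_num) (by norm_num) (by norm_num) (by norm_num) (by norm_num)
      (by norm_num) (by norm_num)
      (by norm_num [gkou]) (by norm_num [gkou]) (by norm_num [gkou]) (by norm_num [gkou])
      (by norm_num) (by norm_num)
      (by norm_num [gkou]) (by norm_num [gkou]) (by norm_num) (by norm_num) (by norm_num)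
  obtain ⟨x3, y3, hx3a, hx3b, hx3p, hy3p, hP3, hQ3, hJ3⟩ :=
    make_sol_pos (185087/250000) (740359/1000000) (1850895467/2500000000)
      (7403581869/10000000000) (3701736011/5000000000) (7403472023/10000000000)
      (740347/1000000) (740359/1000000)
      (by norm_num) (by norm_num) (by norm_num) (by norm_num) (by norm_num) (by norm_num)
      (by norm_num) (by norm_num)
      (by norm_num [gkou]) (by norm_num [gkou]) (by norm_num [gkou]) (by norm_num [gkou])
      (by norm_num) (by norm_num)
      (by norm_num [gkou]) (by norm_num [gkou]) (by norm_num) (by norm_num) (by norm_num)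
  obtain ⟨x4, y4, hx4a, hx4b, hx4p, hy4p, hP4, hQ4, hJ4⟩ :=
    make_sol_neg (779799/1000000) (77981/100000) (3445721417/5000000000)
      (1378288567/2000000000) (6891255527/10000000000) (861406941/1250000000)
      (5513/8000) (137829/200000)
      (by norm_num) (by norm_num) (by norm_num) (by norm_num) (by norm_num) (by norm_num)
      (by norm_num) (by norm_num)
      (by norm_num [gkou]) (by norm_num [gkou]) (by norm_num [gkou]) (by norm_num [gkou])
      (by norm_num) (by norm_num)
      (by norm_num [gkou]) (by norm_num [gkou]) (by norm_num) (by norm_num) (by norm_num)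
  obtain ⟨x5, y5, hx5a, hx5b, hx5p, hy5p, hP5, hQ5, hJ5⟩ :=
    make_sol_pos (163203/200000) (408013/500000) (5968158529/10000000000)
      (596815853/1000000000) (5967714413/10000000000) (2983857207/5000000000)
      (596771/1000000) (37301/62500)
      (by norm_num) (by norm_num) (by norm_num) (by norm_num) (by norm_num) (by norm_num)
      (by norm_num) (by norm_num)
      (by norm_num [gkou]) (by norm_num [gkou]) (by norm_num [gkou]) (by norm_num [gkou])
      (by norm_num) (by norm_num)
      (by norm_num [gkou]) (by norm_num [gkou]) (by norm_num) (by norm_num) (by norm_num)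
  have h12 : x1 < x2 := by linarith
  have h23 : x2 < x3 := by linarith
  have h34 : x3 < x4 := by linarith
  have h45 : x4 < x5 := by linarith
  have ne12 : ((x1, y1) : ℝ × ℝ) ≠ (x2, y2) := by
    intro h; have h' : x1 = x2 := congrArg Prod.fst h; linarith
  have ne13 : ((x1, y1) : ℝ × ℝ) ≠ (x3, y3) := by
    intro h; have h' : x1 = x3 := congrArg Prod.fst h; linarith
  have ne14 : ((x1, y1) : ℝ × ℝ) ≠ (x4, y4) := by
    intro h; have h' : x1 = x4 := congrArg Prod.fst h; linarith
  have ne15 : ((x1, y1) : ℝ × ℝ) ≠ (x5, y5) := by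
    intro h; have h' : x1 = x5 := congrArg Prod.fst h; linarith
  have ne23 : ((x2, y2) : ℝ × ℝ) ≠ (x3, y3) := by
    intro h; have h' : x2 = x3 := congrArg Prod.fst h; linarith
  have ne24 : ((x2, y2) : ℝ × ℝ) ≠ (x4, y4) := by
    intro h; have h' : x2 = x4 := congrArg Prod.fst h; linarith
  have ne25 : ((x2, y2) : ℝ × ℝ) ≠ (x5, y5) := by
    intro h; have h' : x2 = x5 := congrArg Prod.fst h; linarith
  have ne34 : ((x3, y3) : ℝ × ℝ) ≠ (x4, y4) := by
    intro h; have h' : x3 = x4 := congrArg Prod.fst h; linarith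
  have ne35 : ((x3, y3) : ℝ × ℝ) ≠ (x5, y5) := by
    intro h; have h' : x3 = x5 := congrArg Prod.fst h; linarith
  have ne45 : ((x4, y4) : ℝ × ℝ) ≠ (x5, y5) := by
    intro h; have h' : x4 = x5 := congrArg Prod.fst h; linarith
  refine ⟨{(x1, y1), (x2, y2), (x3, y3), (x4, y4), (x5, y5)}, ?_, ?_⟩
  · rw [Finset.card_insert_of_notMem (by simp [ne12, ne13, ne14, ne15]),
      Finset.card_insert_of_notMem (by simp [ne23, ne24, ne25]),
      Finset.card_insert_of_notMem (by simp [ne34, ne35]),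
      Finset.card_insert_of_notMem (by simp [ne45]),
      Finset.card_singleton]
  · intro p hp
    simp only [Finset.mem_insert, Finset.mem_singleton] at hp
    rcases hp with rfl | rfl | rfl | rfl | rfl
    · exact ⟨hx1p, hy1p, hP1, hQ1, hJ1⟩
    · exact ⟨hx2p, hy2p, hP2, hQ2, hJ2⟩
    · exact ⟨hx3p, hy3p, hP3, hQ3, hJ3⟩
    · exact ⟨hx4p, hy4p, hP4, hQ4, hJ4⟩
    · exact ⟨hx5p, hy5p, hP5, hQ5, hJ5⟩
end

section
/- Let F_j denote the j-th Fibonacci number (F₀ = 0, F₁ = 1). For every integer i ≥ 1, set n = F_{2i+2}·F_{2i+3} − 1 and k = F_{2i}·F_{2i+3} − 1. Then the binomial coefficients satisfy C(n+1, k+1) = C(n, k+2). Consequently the number m = C(n+1, k+1) appears at least 6 times in Pascal's triangle, as m = C(m,1) = C(m, m−1) = C(n+1, k+1) = C(n+1, n−k) = C(n, k+2) = C(n, n−k−2). -/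
/-- Odd-index Cassini identity. -/
lemma fib_cassini_odd : ∀ i : ℕ, (Nat.fib (2*i+1))^2 = Nat.fib (2*i) * Nat.fib (2*i+2) + 1 := by
  intro i
  induction i with
  | zero => simp
  | succ n ih =>
    have f2 : Nat.fib (2*n+2) = Nat.fib (2*n) + Nat.fib (2*n+1) := Nat.fib_add_two
    have f3 : Nat.fib (2*n+3) = Nat.fib (2*n+1) + Nat.fib (2*n+2) := Nat.fib_add_two
    have f4 : Nat.fib (2*n+4) = Nat.fib (2*n+2) + Nat.fib (2*n+3) := Nat.fib_add_two
    show Nat.fib (2*n+3) ^ 2 = Nat.fib (2*n+2) * Nat.fib (2*n+4) + 1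
    rw [f4, f3, f2]
    nlinarith [ih]

lemma choose_mono_right {n a b : ℕ} (hab : a ≤ b) (hb : b ≤ n / 2) :
    n.choose a ≤ n.choose b := by
  induction b with
  | zero =>
    have : a = 0 := by omega
    subst this; rfl
  | succ b ih =>
    rcases Nat.lt_or_ge a (b+1) with h | h
    · exact (ih (by omega) (by omega)).trans
        (Nat.choose_le_succ_of_lt_half_left (by omega))
    · have : a = b + 1 := by omega
      subst this; rfl

lemma master (N K : ℕ) (h : (N+1)*(K+2) = (N-K)*(N-K-1)) :
    (N+1).choose (K+1) = N.choose (K+2) := by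
  have e1 : Nat.choose (N+1) (K+1) * (K+1) = (N+1) * Nat.choose N K :=
    (Nat.add_one_mul_choose_eq N K).symm
  have e2 : Nat.choose N (K+2) * (K+2) = Nat.choose N (K+1) * (N - (K+1)) :=
    Nat.choose_succ_right_eq N (K+1)
  have e3 : Nat.choose N (K+1) * (K+1) = Nat.choose N K * (N - K) :=
    Nat.choose_succ_right_eq N K
  have hsub : N - (K+1) = N - K - 1 := by omega
  apply Nat.eq_of_mul_eq_mul_right (show 0 < (K+1)*(K+2) by positivity)
  calc Nat.choose (N+1) (K+1) * ((K+1)*(K+2))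
      = (Nat.choose (N+1) (K+1) * (K+1)) * (K+2) := by ring
    _ = ((N+1) * Nat.choose N K) * (K+2) := by rw [e1]
    _ = Nat.choose N K * ((N+1)*(K+2)) := by ring
    _ = Nat.choose N K * ((N-K)*(N-K-1)) := by rw [h]
    _ = (Nat.choose N K * (N-K)) * (N-K-1) := by ring
    _ = (Nat.choose N (K+1) * (K+1)) * (N-K-1) := by rw [e3]
    _ = (Nat.choose N (K+1) * (N - (K+1))) * (K+1) := by rw [hsub]; ring
    _ = (Nat.choose N (K+2) * (K+2)) * (K+1) := by rw [e2]
    _ = Nat.choose N (K+2) * ((K+1)*(K+2)) := by ring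

/-- Singmaster's construction: with `n = F_{2i+2} F_{2i+3} − 1` and
`k = F_{2i} F_{2i+3} − 1`, one has `C(n+1, k+1) = C(n, k+2)`, and consequently
`m = C(n+1, k+1)` appears at least 6 times in Pascal's triangle. -/
theorem stmt_12 (i : ℕ) (hi : 1 ≤ i) :
    Nat.choose (Nat.fib (2 * i + 2) * Nat.fib (2 * i + 3) - 1 + 1)
        (Nat.fib (2 * i) * Nat.fib (2 * i + 3) - 1 + 1) =
      Nat.choose (Nat.fib (2 * i + 2) * Nat.fib (2 * i + 3) - 1)
        (Nat.fib (2 * i) * Nat.fib (2 * i + 3) - 1 + 2) ∧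
    ∀ n k m : ℕ,
      n = Nat.fib (2 * i + 2) * Nat.fib (2 * i + 3) - 1 →
      k = Nat.fib (2 * i) * Nat.fib (2 * i + 3) - 1 →
      m = Nat.choose (n + 1) (k + 1) →
      m = Nat.choose m 1 ∧ m = Nat.choose m (m - 1) ∧
      m = Nat.choose (n + 1) (k + 1) ∧ m = Nat.choose (n + 1) (n - k) ∧
      m = Nat.choose n (k + 2) ∧ m = Nat.choose n (n - k - 2) ∧
      ∃ s : Finset (ℕ × ℕ), s.card = 6 ∧ ∀ p ∈ s, Nat.choose p.1 p.2 = m := by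
  set a := Nat.fib (2 * i) with ha_def
  set b := Nat.fib (2 * i + 1) with hb_def
  set c := Nat.fib (2 * i + 2) with hc_def
  set d := Nat.fib (2 * i + 3) with hd_def
  have hc : c = a + b := Nat.fib_add_two
  have hd : d = b + c := Nat.fib_add_two
  have hcass : b ^ 2 = a * c + 1 := fib_cassini_odd i
  have ha1 : 1 ≤ a := Nat.fib_pos.mpr (by omega)
  have hab : a < b := Nat.fib_lt_fib_succ (by omega)
  have hb2 : 2 ≤ b := by omega
  have hd5 : 5 ≤ d := by omega
  -- facts about the three products, phrased linearly in the atoms a*d, b*d, c*d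
  have hR : c * d = a * d + b * d := by rw [hc]; ring
  have hP : 0 < a * d := Nat.mul_pos (by omega) (by omega)
  have hPd : d ≤ a * d := Nat.le_mul_of_pos_left d (by omega)
  have hPQ : a * d + d ≤ b * d := by
    calc a * d + d = (a + 1) * d := by ring
      _ ≤ b * d := Nat.mul_le_mul_right d (by omega)
  -- the key numerical identity
  have h1 : (b * d) * (b * d) = (c * d) * (a * d + 1) + b * d := by
    have e : d * d = b * d + c * d := by nth_rewrite 1 [hd]; ring
    calc (b * d) * (b * d) = b ^ 2 * (d * d) := by ring
      _ = (a * c + 1) * (d * d) := by rw [hcass]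
      _ = a * c * (d * d) + d * d := by ring
      _ = a * c * (d * d) + (b * d + c * d) := by rw [e]
      _ = (c * d) * (a * d + 1) + b * d := by ring
  have hkey : (c * d) * (a * d + 1) = (b * d) * (b * d - 1) := by
    obtain ⟨q, hq⟩ : ∃ q, b * d = q + 1 := ⟨b * d - 1, by omega⟩
    rw [hq] at h1 ⊢
    simp only [Nat.add_sub_cancel]
    nlinarith [h1]
  have part1 : Nat.choose (c * d - 1 + 1) (a * d - 1 + 1) =
      Nat.choose (c * d - 1) (a * d - 1 + 2) := by
    apply master
    have hs1 : c * d - 1 + 1 = c * d := by omega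
    have hs2 : a * d - 1 + 2 = a * d + 1 := by omega
    have hs3 : c * d - 1 - (a * d - 1) = b * d := by omega
    rw [hs1, hs2, hs3]
    exact hkey
  refine ⟨part1, ?_⟩
  intro n k m hn hk hm
  have hn1 : n + 1 = c * d := by omega
  have hk1 : k + 1 = a * d := by omega
  have hnk : n - k = b * d := by omega
  have hkn : k + 2 ≤ n := by omega
  -- lower bound on m
  have hmono : Nat.choose (n + 1) 2 ≤ Nat.choose (n + 1) (k + 1) :=
    choose_mono_right (by omega) (by omega)
  have h2r : Nat.choose (n + 1) 2 = (n + 1) * n / 2 := by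
    rw [Nat.choose_two_right, Nat.add_sub_cancel]
  have hX : (n + 1) * 3 ≤ (n + 1) * n := Nat.mul_le_mul_left (n + 1) (by omega)
  have hmn : n + 1 < m := by rw [hm]; omega
  have G1 : m = Nat.choose m 1 := (Nat.choose_one_right m).symm
  have G2 : m = Nat.choose m (m - 1) := by
    rw [Nat.choose_symm (show 1 ≤ m by omega), Nat.choose_one_right]
  have G4 : m = Nat.choose (n + 1) (n - k) := by
    rw [hm, show n - k = n + 1 - (k + 1) by omega,
      Nat.choose_symm (show k + 1 ≤ n + 1 by omega)]
  have G5 : m = Nat.choose n (k + 2) := by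
    rw [hm, hn, hk]; exact part1
  have G6 : m = Nat.choose n (n - k - 2) := by
    rw [show n - k - 2 = n - (k + 2) by omega, Nat.choose_symm hkn]
    exact G5
  refine ⟨G1, G2, hm, G4, G5, G6,
    {(m, 1), (m, m - 1), (n + 1, k + 1), (n + 1, n - k), (n, k + 2), (n, n - k - 2)},
    ?_, ?_⟩
  · rw [Finset.card_insert_of_notMem (by simp [Prod.ext_iff] <;> omega),
      Finset.card_insert_of_notMem (by simp [Prod.ext_iff] <;> omega),
      Finset.card_insert_of_notMem (by simp [Prod.ext_iff] <;> omega),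
      Finset.card_insert_of_notMem (by simp [Prod.ext_iff] <;> omega),
      Finset.card_insert_of_notMem (by simp [Prod.ext_iff] <;> omega),
      Finset.card_singleton]
  · intro p hp
    simp only [Finset.mem_insert, Finset.mem_singleton] at hp
    rcases hp with rfl | rfl | rfl | rfl | rfl | rfl
    · exact G1.symm
    · exact G2.symm
    · exact hm.symm
    · exact G4.symm
    · exact G5.symm
    · exact G6.symm
end

section
/- Let f be a complex polynomial (regarded as a function on [0,1] ⊂ ℝ) such that all its moments vanish: ∫₀¹ f(x)^m dx = 0 for every integer m ≥ 1. Then for every t ∈ ℂ with |t| · max_{x ∈ [0,1]} |f(x)| < 1, one has ∫₀¹ 1/(1 − t·f(x)) dx = 1. -/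
/-!
Under `|t| · max |f| < 1` the geometric series `∑ (t f)ⁿ` converges to `1 / (1 - t f)` on `[0,1]`,
dominated termwise by the summable constants `(|t| · max |f|)ⁿ`, so it may be integrated term by
term. The `n`-th term integrates to `tⁿ Mₙ`, which vanishes for `n ≥ 1`, leaving only `∫₀¹ 1 = 1`.
-/

open MeasureTheory Set Interval

theorem le_ciSup₂_of_bddAbove_image {α β : Type*} [ConditionallyCompleteLattice α] {f : β → α}
    {s : Set β} (H : BddAbove (f '' s)) {c : β} (hc : c ∈ s) : f c ≤ ⨆ x ∈ s, f x :=
  le_ciSup₂ (f := fun x (_ : x ∈ s) => f x)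
    (H.mono <| iUnion_subset fun _ => range_subset_iff.2 fun hx => mem_image_of_mem f hx) c hc

theorem intervalIntegral.hasSum_integral_pow_of_norm_le {𝕜 : Type*} [NormedDivisionRing 𝕜]
    [NormedSpace ℝ 𝕜] [CompleteSpace 𝕜] {g : ℝ → 𝕜} {a b r : ℝ}
    (hg : AEStronglyMeasurable g (volume.restrict (Ι a b))) (hr : r < 1)
    (hgr : ∀ x ∈ Ι a b, ‖g x‖ ≤ r) :
    HasSum (fun n : ℕ => ∫ x in a..b, g x ^ n) (∫ x in a..b, (1 - g x)⁻¹) := by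
  refine intervalIntegral.hasSum_integral_of_dominated_convergence (fun n _ => r ^ n)
    (fun n => hg.pow n) (fun n => ae_of_all _ fun x hx => ?_)
    (ae_of_all _ fun x hx => summable_geometric_of_lt_one ((norm_nonneg _).trans (hgr x hx)) hr)
    intervalIntegrable_const
    (ae_of_all _ fun x hx => hasSum_geometric_of_norm_lt_one ((hgr x hx).trans_lt hr))
  rw [norm_pow]
  exact pow_le_pow_left₀ (norm_nonneg _) (hgr x hx) n

/-- If all the moments of a complex polynomial `f` on `[0,1]` vanish, then
`∫₀¹ 1/(1 − t f(x)) dx = 1` for every `t` with `|t| · max_{[0,1]} |f| < 1`. -/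
theorem stmt_13 (f : Polynomial ℂ)
    (hM : ∀ m : ℕ, 1 ≤ m → (∫ x in (0:ℝ)..1, (f.eval (x : ℂ)) ^ m) = 0)
    (t : ℂ)
    (ht : ‖t‖ * (⨆ x ∈ Set.Icc (0:ℝ) 1, ‖f.eval (x : ℂ)‖) < 1) :
    (∫ x in (0:ℝ)..1, 1 / (1 - t * f.eval (x : ℂ))) = 1 := by
  have hcont : Continuous fun x : ℝ => f.eval (x : ℂ) := by fun_prop
  have hbound : ∀ x ∈ Ι (0:ℝ) 1,
      ‖t * f.eval (x : ℂ)‖ ≤ ‖t‖ * ⨆ y ∈ Icc (0:ℝ) 1, ‖f.eval (y : ℂ)‖ := fun x hx => by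
    rw [norm_mul]
    gcongr
    refine le_ciSup₂_of_bddAbove_image (f := fun x : ℝ => ‖f.eval (x : ℂ)‖)
      (isCompact_Icc.bddAbove_image hcont.norm.continuousOn) ?_
    rw [uIoc_of_le zero_le_one] at hx
    exact Ioc_subset_Icc_self hx
  have hsum := intervalIntegral.hasSum_integral_pow_of_norm_le
    (hcont.const_mul t).aestronglyMeasurable ht hbound
  have hsum_one : HasSum (fun n : ℕ => ∫ x in (0:ℝ)..1, (t * f.eval (x : ℂ)) ^ n) 1 := by
    convert hasSum_single 0 fun n hn => ?_
    · simp
    · simp_rw [mul_pow, intervalIntegral.integral_const_mul, hM n (Nat.one_le_iff_ne_zero.2 hn),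
        mul_zero]
  simpa only [one_div] using hsum.unique hsum_one
end
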